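/- Let G be a finite group, N a normal subgroup, and χ an irreducible character of G. Then there is a positive integer e and irreducible characters φ₁, ..., φ_n of N, all G-conjugate to one another, such that the restriction of χ to N equals e·(φ₁ + ⋯ + φ_n). -/

import Mathlib

/-!
Restrict the simple `G`-module `V` to `N` and split it (Maschke) into simple `N`-modules `Sᵢ`.
If `f : Sⱼ → V` and `q : V → Sᵢ` are nonzero `N`-maps, the `G`-translates of `f(Sⱼ)` span
`V` because `V` is simple, so `q ∘ ρ(g) ∘ f ≠ 0` for some `g`. That map intertwines `Sⱼ` with
the `g`-conjugate of `Sᵢ`, so by Schur the two are conjugate. The multiplicity of `θ` in `χ_N`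
is the pairing `⟨χ_N, θ⟩`, which does not change when `θ` is conjugated because `χ` is a class
function on `G`; hence all constituents occur with the same multiplicity.
-/

open scoped Classical Pointwise

/-- `χ : G → ℂ` is an irreducible (complex) character of `G`. -/
def IsIrrChar (G : Type) [Group G] (χ : G → ℂ) : Prop :=
  ∃ V : FDRep ℂ G, CategoryTheory.Simple V ∧ χ = V.character

/-- A nonlinear irreducible character: irreducible of degree `> 1`. -/
def IsNonlinChar (G : Type) [Group G] (χ : G → ℂ) : Prop :=
  IsIrrChar G χ ∧ 1 < (χ 1).re

/-- The conjugacy class of `g` in `G`. -/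
def conjClass {G : Type*} [Group G] (g : G) : Set G := {x | IsConj g x}

/-- The character of `N` obtained by conjugating `φ` by `g`. -/
def conjChar {G : Type*} [Group G] (N : Subgroup G) (hN : N.Normal) (g : G)
    (φ : N → ℂ) : N → ℂ :=
  fun n => φ ⟨g * (n : G) * g⁻¹, hN.conj_mem (n : G) n.2 g⟩


universe u

open CategoryTheory Representation Finset

namespace Representation

section Subrepresentations

variable {k G H V W W' : Type*} [Field k] [Group G] [Group H]
  [AddCommGroup V] [Module k V] [AddCommGroup W] [Module k W] [AddCommGroup W'] [Module k W']

instance Subrepresentation.nontrivial [Nontrivial V] (ρ : Representation k G V) :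
    Nontrivial (Subrepresentation ρ) := by
  obtain ⟨x, hx⟩ := exists_ne (0 : V)
  exact ⟨⊥, ⊤, fun h =>
    hx ((Submodule.mem_bot k).mp ((SetLike.ext_iff.mp h x).mpr Submodule.mem_top))⟩

theorem Subrepresentation.isCompl_toSubmodule {ρ : Representation k G V}
    {U U' : Subrepresentation ρ} (h : IsCompl U U') : IsCompl U.toSubmodule U'.toSubmodule :=
  .of_eq (congrArg Subrepresentation.toSubmodule h.inf_eq_bot)
    (congrArg Subrepresentation.toSubmodule h.sup_eq_top)

theorem character_eq_add_of_isCompl [FiniteDimensional k V] {ρ : Representation k G V}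
    {U U' : Subrepresentation ρ} (h : IsCompl U U') :
    ρ.character = U.toRepresentation.character + U'.toRepresentation.character := by
  ext g
  have hint : DirectSum.IsInternal fun b => cond b U.toSubmodule U'.toSubmodule :=
    (DirectSum.isInternal_submodule_iff_isCompl _ (i := true) (j := false) (by decide)
      (by ext b; cases b <;> simp)).mpr (Subrepresentation.isCompl_toSubmodule h)
  rw [character, LinearMap.trace_eq_sum_trace_restrict hint (f := ρ g)
    (fun b => by cases b <;> exact Subrepresentation.apply_mem_toSubmodule _ g), Fintype.sum_bool]
  rfl

def Subrepresentation.orderIsoComp (σ : Representation k H W) {f : G →* H}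
    (hf : Function.Surjective f) : Subrepresentation (σ.comp f) ≃o Subrepresentation σ where
  toFun U := ⟨U.toSubmodule, fun h v hv => by
    obtain ⟨g, rfl⟩ := hf h
    exact U.apply_mem_toSubmodule g hv⟩
  invFun U := ⟨U.toSubmodule, fun g _ hv => U.apply_mem_toSubmodule (f g) hv⟩
  left_inv _ := rfl
  right_inv _ := rfl
  map_rel_iff' := Iff.rfl

theorem isIrreducible_comp_iff (σ : Representation k H W) {f : G →* H}
    (hf : Function.Surjective f) : IsIrreducible (σ.comp f) ↔ IsIrreducible σ :=
  (Subrepresentation.orderIsoComp σ hf).isSimpleOrder_iff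

theorem IsIrreducible.iSup_map_eq_top {ρ : Representation k G V} [IsIrreducible ρ]
    {p : Submodule k V} (hp : p ≠ ⊥) : ⨆ g, p.map (ρ g) = ⊤ := by
  have hmap : ∀ h, (⨆ g, p.map (ρ g)).map (ρ h) ≤ ⨆ g, p.map (ρ g) := fun h => by
    rw [Submodule.map_iSup]
    refine iSup_le fun g => le_iSup_of_le (h * g) ?_
    rw [← Submodule.map_comp, ← Module.End.mul_eq_comp, ← map_mul]
  let S : Subrepresentation ρ :=
    ⟨⨆ g, p.map (ρ g), fun h _ hv => hmap h (Submodule.mem_map_of_mem hv)⟩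
  have hpS : p ≤ S.toSubmodule :=
    le_iSup_of_le 1 (by rw [map_one, Module.End.one_eq_id, Submodule.map_id])
  have hS : S ≠ ⊥ := fun h =>
    hp (eq_bot_iff.mpr (hpS.trans_eq (congrArg Subrepresentation.toSubmodule h)))
  exact congrArg Subrepresentation.toSubmodule
    ((IsSimpleOrder.eq_bot_or_eq_top S).resolve_left hS)

theorem IsIrreducible.exists_comp_ne_zero {ρ : Representation k G V} [IsIrreducible ρ]
    {f : W →ₗ[k] V} {q : V →ₗ[k] W'} (hf : f ≠ 0) (hq : q ≠ 0) : ∃ g, q ∘ₗ ρ g ∘ₗ f ≠ 0 := by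
  by_contra! h
  have hker : ⨆ g, (LinearMap.range f).map (ρ g) ≤ LinearMap.ker q :=
    iSup_le fun g => by
      rintro _ ⟨_, ⟨w, rfl⟩, rfl⟩
      exact LinearMap.congr_fun (h g) w
  rw [iSup_map_eq_top (mt LinearMap.range_eq_bot.mp hf), top_le_iff,
    LinearMap.ker_eq_top] at hker
  exact hq hker

end Subrepresentations

section Conjugation

variable {k G V W W' : Type*} [Field k] [Group G] {N : Subgroup G} [N.Normal]
  [AddCommGroup V] [Module k V] [AddCommGroup W] [Module k W] [AddCommGroup W'] [Module k W']
  {ρ : Representation k G V} {σ₁ : Representation k N W} {σ₂ : Representation k N W'}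

def IntertwiningMap.conjComp (q : IntertwiningMap (ρ.comp N.subtype) σ₂) (g : G)
    (f : IntertwiningMap σ₁ (ρ.comp N.subtype)) :
    IntertwiningMap σ₁ (σ₂.comp (MulAut.conjNormal g).toMonoidHom) :=
  ⟨q.toLinearMap ∘ₗ ρ g ∘ₗ f.toLinearMap, fun m => LinearMap.ext fun w => by
    have hconj : ρ g ∘ₗ ρ m = ρ (MulAut.conjNormal g m) ∘ₗ ρ g := by
      simp only [MulAut.conjNormal_apply, ← Module.End.mul_eq_comp, ← map_mul,
        inv_mul_cancel_right]
    simp only [LinearMap.comp_apply, IntertwiningMap.toLinearMap_apply, f.isIntertwining]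
    exact (congrArg q (LinearMap.congr_fun hconj (f w))).trans
      (IntertwiningMap.isIntertwining _ _ q (MulAut.conjNormal g m) (ρ g (f w)))⟩

theorem exists_equiv_comp_conjNormal [IsIrreducible ρ] [IsIrreducible σ₁] [IsIrreducible σ₂]
    (f : IntertwiningMap σ₁ (ρ.comp N.subtype)) (hf : f ≠ 0)
    (q : IntertwiningMap (ρ.comp N.subtype) σ₂) (hq : q ≠ 0) :
    ∃ g : G, Nonempty (Equiv σ₁ (σ₂.comp (MulAut.conjNormal g).toMonoidHom)) := by
  obtain ⟨g, hg⟩ := IsIrreducible.exists_comp_ne_zero (ρ := ρ)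
    (fun h => hf (IntertwiningMap.ext h)) (fun h => hq (IntertwiningMap.ext h))
  have : IsIrreducible (σ₂.comp (MulAut.conjNormal g).toMonoidHom) :=
    (isIrreducible_comp_iff σ₂ (MulAut.conjNormal g).surjective).mpr ‹_›
  have hbij := (IsIrreducible.bijective_or_eq_zero (q.conjComp g f)).resolve_right
    fun h0 => hg (congrArg IntertwiningMap.toLinearMap h0)
  exact ⟨g, ⟨(q.conjComp g f).ofBijective hbij⟩⟩

end Conjugation

section CharPairing

variable {k H V W : Type*} [Field k] [Group H] [Fintype H]
  [AddCommGroup V] [Module k V] [FiniteDimensional k V]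
  [AddCommGroup W] [Module k W] [FiniteDimensional k W]

/-- On characters `β h⁻¹` is the complex conjugate of `β h`; this bilinear form of the usual
inner product makes sense over any field. -/
noncomputable def charPairing (α β : H → k) : k := (Nat.card H : k)⁻¹ * ∑ h, α h * β h⁻¹

theorem charPairing_comm (α β : H → k) : charPairing α β = charPairing β α := by
  unfold charPairing
  congr 1
  exact Fintype.sum_equiv (Equiv.inv H) _ _ fun h => by simp [mul_comm]

theorem charPairing_sum_left {ι : Type*} (s : Finset ι) (α : ι → H → k) (β : H → k) :
    charPairing (∑ i ∈ s, α i) β = ∑ i ∈ s, charPairing (α i) β := by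
  simp only [charPairing, Finset.sum_apply, Finset.sum_mul, Finset.mul_sum]
  exact Finset.sum_comm

variable [Invertible (Nat.card H : k)]

theorem charPairing_character_eq_finrank (ρ : Representation k H V) (σ : Representation k H W) :
    charPairing ρ.character σ.character = Module.finrank k (IntertwiningMap σ ρ) :=
  card_inv_mul_sum_char_mul_char_eq_finrank σ ρ

theorem exists_intertwiningMap_ne_zero_of_charPairing_ne_zero
    {ρ : Representation k H V} {σ : Representation k H W}
    (h : charPairing ρ.character σ.character ≠ 0) : ∃ f : IntertwiningMap σ ρ, f ≠ 0 := by
  rw [charPairing_character_eq_finrank] at h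
  exact Module.finrank_pos_iff_exists_ne_zero.mp
    (Nat.pos_of_ne_zero fun h0 => h (by rw [h0, Nat.cast_zero]))

variable [IsAlgClosed k]

theorem charPairing_character_of_isIrreducible [DecidableEq (H → k)]
    (σ : Representation k H V) (τ : Representation k H W) [IsIrreducible σ] [IsIrreducible τ] :
    charPairing σ.character τ.character = if σ.character = τ.character then 1 else 0 := by
  have horth := char_orthonormal σ τ
  by_cases hστ : σ.character = τ.character
  · have hself := char_orthonormal σ σ
    rw [if_pos ⟨Equiv.refl σ⟩] at hself
    rw [if_pos hστ, charPairing, ← hστ, hself]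
  · rw [if_neg fun ⟨e⟩ => hστ (char_iso e).symm] at horth
    rw [if_neg hστ, charPairing, horth]

theorem charPairing_sum_character_eq_card [DecidableEq (H → k)] {ι : Type*} [Fintype ι]
    (S : ι → FDRep k H) (hS : ∀ i, IsIrreducible (S i).ρ)
    (σ : Representation k H W) [IsIrreducible σ] :
    charPairing (∑ i, (S i).character) σ.character = #{i | (S i).character = σ.character} := by
  rw [charPairing_sum_left, Finset.natCast_card_filter]
  refine Finset.sum_congr rfl fun i _ => ?_
  have := hS i
  exact charPairing_character_of_isIrreducible (S i).ρ σ

end CharPairing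

section Clifford

variable {k G V : Type*} [Field k] [Group G] {N : Subgroup G} [N.Normal] [Fintype N]
  [AddCommGroup V] [Module k V]

theorem charPairing_comp_conjNormal {W : Type*} [AddCommGroup W] [Module k W]
    (ρ : Representation k G V) (σ : Representation k N W) (g : G) :
    charPairing (character (ρ.comp N.subtype))
        (character (σ.comp (MulAut.conjNormal g).toMonoidHom)) =
      charPairing (character (ρ.comp N.subtype)) σ.character := by
  unfold charPairing
  congr 1
  refine Fintype.sum_equiv (MulAut.conjNormal g).toEquiv _ _ fun m => ?_
  congr 1
  · exact (char_conj ρ m g).symm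
  · exact congrArg (character σ) (map_inv (MulAut.conjNormal g) m)

variable [IsAlgClosed k] [CharZero k] [Invertible (Nat.card N : k)] [FiniteDimensional k V]
  {ρ : Representation k G V} [IsIrreducible ρ] {ι : Type*} [Fintype ι] {S : ι → FDRep k N}

theorem exists_character_eq_conj_of_constituents (hS : ∀ i, IsIrreducible (S i).ρ)
    (hρ : character (ρ.comp N.subtype) = ∑ i, (S i).character) (i j : ι) :
    ∃ g : G, (S j).character = character ((S i).ρ.comp (MulAut.conjNormal g).toMonoidHom) := by
  have hpairing : ∀ l, charPairing (character (ρ.comp N.subtype)) (character (S l).ρ) ≠ 0 :=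
    fun l => by
      have := hS l
      rw [hρ, charPairing_sum_character_eq_card S hS, Nat.cast_ne_zero, ← Nat.pos_iff_ne_zero]
      exact Finset.card_pos.mpr ⟨l, Finset.mem_filter.mpr ⟨Finset.mem_univ l, rfl⟩⟩
  obtain ⟨f, hf⟩ := exists_intertwiningMap_ne_zero_of_charPairing_ne_zero (hpairing j)
  obtain ⟨q, hq⟩ := exists_intertwiningMap_ne_zero_of_charPairing_ne_zero
    (charPairing_comm (character (ρ.comp N.subtype)) _ ▸ hpairing i)
  have := hS i
  have := hS j
  obtain ⟨g, ⟨e⟩⟩ := exists_equiv_comp_conjNormal f hf q hq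
  exact ⟨g, char_iso e⟩

theorem card_filter_character_eq [DecidableEq (N → k)] (hS : ∀ i, IsIrreducible (S i).ρ)
    (hρ : character (ρ.comp N.subtype) = ∑ i, (S i).character) (i j : ι) :
    #{l | (S l).character = (S i).character} = #{l | (S l).character = (S j).character} := by
  obtain ⟨g, hg⟩ := exists_character_eq_conj_of_constituents hS hρ i j
  have := hS i
  have := hS j
  have hi := charPairing_sum_character_eq_card S hS (S i).ρ
  have hj := charPairing_sum_character_eq_card S hS (S j).ρ
  rw [← hρ] at hi hj
  have key := charPairing_comp_conjNormal ρ (S i).ρ g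
  rw [← hg] at key
  exact Nat.cast_injective (R := k) (hi.symm.trans (key.symm.trans hj))

end Clifford

end Representation

namespace FDRep

variable {k G : Type u} [Field k] [Group G]

def subrepresentationι (V : FDRep k G) (W : Subrepresentation V.ρ) :
    FDRep.of W.toRepresentation ⟶ V :=
  ⟨FGModuleCat.ofHom W.toSubmodule.subtype, fun _ => rfl⟩

instance (V : FDRep k G) (W : Subrepresentation V.ρ) : Mono (subrepresentationι V W) :=
  ConcreteCategory.mono_of_injective _ Subtype.val_injective

theorem nontrivial_of_simple (V : FDRep k G) [Simple V] : Nontrivial V := by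
  by_contra h
  rw [not_nontrivial_iff_subsingleton] at h
  exact id_nonzero V (ConcreteCategory.hom_ext _ _ fun _ => Subsingleton.elim _ _)

theorem simple_iff_isIrreducible (V : FDRep k G) : Simple V ↔ IsIrreducible V.ρ := by
  constructor
  · intro _
    have := nontrivial_of_simple V
    refine { eq_bot_or_eq_top := fun W => or_iff_not_imp_left.mpr fun hW => ?_ }
    have hι : subrepresentationι V W ≠ 0 := by
      obtain ⟨x, hxW, hx⟩ : ∃ x ∈ W, x ≠ 0 := by
        by_contra! h
        exact hW (SetLike.ext fun x => ⟨fun hx => (Submodule.mem_bot k).mpr (h x hx),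
          fun hx => ((Submodule.mem_bot k).mp hx) ▸ W.toSubmodule.zero_mem⟩)
      exact fun h0 => hx (congrArg (fun f => f.hom ⟨x, hxW⟩) h0)
    have := isIso_of_mono_of_nonzero hι
    refine SetLike.ext fun x => ⟨fun _ => Submodule.mem_top, fun _ => ?_⟩
    obtain ⟨y, rfl⟩ := (ConcreteCategory.bijective_of_isIso (subrepresentationι V W)).2 x
    exact y.2
  · intro h
    let F := forget₂ (FDRep k G) (Rep k G) ⋙ Rep.equivalenceModuleMonoidAlgebra.functor
    have hV : IsSimpleModule (MonoidAlgebra k G) (Representation.asModule V.ρ) :=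
      (irreducible_iff_isSimpleModule_asModule _).mp h
    have : Simple (F.obj V) := (simple_iff_isSimpleModule' (F.obj V)).mpr hV
    exact F.simple_of_simple_obj V

theorem exists_character_eq_sum_irreducible [Finite G] [NeZero (Nat.card G : k)]
    (V : FDRep k G) :
    ∃ (ι : Type) (_ : Fintype ι) (S : ι → FDRep k G),
      (∀ i, IsIrreducible (S i).ρ) ∧ V.character = ∑ i, (S i).character := by
  induction hd : Module.finrank k V using Nat.strong_induction_on generalizing V with
  | _ d ih =>
  by_cases hV : IsIrreducible V.ρ
  · exact ⟨Unit, inferInstance, fun _ => V, fun _ => hV, by simp⟩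
  cases subsingleton_or_nontrivial V with
  | inl _ =>
    refine ⟨Empty, inferInstance, Empty.elim, Empty.rec, ?_⟩
    ext g
    simp [character, Subsingleton.elim (V.ρ g) 0]
  | inr _ =>
  obtain ⟨U, hUbot, hUtop⟩ : ∃ U : Subrepresentation V.ρ, U ≠ ⊥ ∧ U ≠ ⊤ := by
    by_contra! h
    exact hV { eq_bot_or_eq_top := fun U => or_iff_not_imp_left.mpr (h U) }
  obtain ⟨U', hU⟩ := exists_isCompl U
  have hlt : ∀ {U : Subrepresentation V.ρ}, U ≠ ⊤ → Module.finrank k U.toSubmodule < d :=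
    fun hU => hd ▸ Submodule.finrank_lt (fun h => hU (Subrepresentation.ext h))
  obtain ⟨ι, _, S, hS, hSV⟩ := ih _ (hlt hUtop) (FDRep.of U.toRepresentation) rfl
  obtain ⟨ι', _, S', hS', hSV'⟩ :=
    ih _ (hlt fun h => hUbot (eq_bot_of_isCompl_top (h ▸ hU))) (FDRep.of U'.toRepresentation) rfl
  refine ⟨ι ⊕ ι', inferInstance, Sum.elim S S', Sum.rec hS hS', ?_⟩
  rw [Fintype.sum_sum_type]
  exact (character_eq_add_of_isCompl hU).trans (congrArg₂ (· + ·) hSV hSV')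

theorem nonempty_of_character_eq_sum [CharZero k] {V : FDRep k G} [Nontrivial V] {ι : Type*}
    [Fintype ι] {S : ι → FDRep k G} (h : V.character = ∑ i, (S i).character) : Nonempty ι := by
  by_contra hι
  rw [not_nonempty_iff] at hι
  have h1 := congrFun h 1
  rw [char_one, univ_eq_empty, sum_empty, Pi.zero_apply, Nat.cast_eq_zero] at h1
  exact Module.finrank_pos.ne' h1

end FDRep

theorem exists_injective_sum_eq_nsmul_of_card_fiber_eq {ι β : Type*} [Fintype ι] [Nonempty ι]
    [AddCommMonoid β] [DecidableEq β] (θ : ι → β)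
    (hθ : ∀ i j, #{l | θ l = θ i} = #{l | θ l = θ j}) :
    ∃ (e n : ℕ) (φ : Fin n → β), 0 < e ∧ 0 < n ∧ Function.Injective φ ∧
      (∀ a, ∃ i, φ a = θ i) ∧ ∑ i, θ i = e • ∑ a, φ a := by
  let Φ := univ.image θ
  let i₀ := Classical.arbitrary ι
  let e := #{l | θ l = θ i₀}
  refine ⟨e, #Φ, fun a => Φ.equivFin.symm a, card_pos.mpr ⟨i₀, by simp⟩,
    card_pos.mpr (univ_nonempty.image θ), fun a b h => Φ.equivFin.symm.injective (Subtype.ext h),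
    fun a => ?_, ?_⟩
  · obtain ⟨i, -, hi⟩ := mem_image.mp (Φ.equivFin.symm a).2
    exact ⟨i, hi.symm⟩
  calc ∑ i, θ i = ∑ b ∈ Φ, #{l | θ l = b} • b := sum_comp id θ
    _ = ∑ b ∈ Φ, e • b := sum_congr rfl fun b hb => by
      obtain ⟨i, -, rfl⟩ := mem_image.mp hb
      rw [hθ i i₀]
    _ = e • ∑ a, (Φ.equivFin.symm a : β) := by
      rw [← smul_sum, ← sum_coe_sort Φ, Φ.equivFin.symm.sum_comp (fun b : Φ => (b : β))]

theorem clifford_theorem (G : Type) [Group G] [Fintype G]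
    (N : Subgroup G) (hN : N.Normal) (χ : G → ℂ) (hχ : IsIrrChar G χ) :
    ∃ (e n : ℕ) (φ : Fin n → (N → ℂ)), 0 < e ∧ 0 < n ∧
      Function.Injective φ ∧
      (∀ i, IsIrrChar N (φ i)) ∧
      (∀ i j, ∃ g : G, φ j = conjChar N hN g (φ i)) ∧
      ∀ m : N, χ m = (e : ℂ) * ∑ i, φ i m := by
  obtain ⟨V, hV, rfl⟩ := hχ
  have := (FDRep.simple_iff_isIrreducible V).mp hV
  have : Invertible (Nat.card N : ℂ) := invertibleOfNonzero (NeZero.ne _)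
  obtain ⟨ι, _, S, hS, hVS⟩ :=
    FDRep.exists_character_eq_sum_irreducible (FDRep.of (V.ρ.comp N.subtype))
  have := FDRep.nontrivial_of_simple V
  have : Nonempty ι := FDRep.nonempty_of_character_eq_sum hVS
  obtain ⟨e, n, φ, he, hn, hφ, hφS, hsum⟩ := exists_injective_sum_eq_nsmul_of_card_fiber_eq
    (fun i => (S i).character) (card_filter_character_eq (ρ := V.ρ) hS hVS)
  refine ⟨e, n, φ, he, hn, hφ, fun a => ?_, fun a b => ?_, fun m => ?_⟩
  · obtain ⟨i, hi⟩ := hφS a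
    exact ⟨S i, (FDRep.simple_iff_isIrreducible _).mpr (hS i), hi⟩
  · obtain ⟨i, hi⟩ := hφS a
    obtain ⟨j, hj⟩ := hφS b
    obtain ⟨g, hg⟩ := exists_character_eq_conj_of_constituents (ρ := V.ρ) hS hVS i j
    exact ⟨g, by rw [hi, hj, hg]; rfl⟩
  · refine (congrFun hVS m).trans ?_
    rw [hsum, Pi.smul_apply, Finset.sum_apply, nsmul_eq_mul]
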